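/- arXiv:1904.06719 — 13 statements merged into one kernel-verified Lean document; each statement's English description precedes it below -/
import Mathlib

section
/- Let X be a type equipped with a Mal'tsev operation p, and let R : X → X → Prop be a reflexive relation compatible with p, i.e. R x₁ y₁, R x₂ y₂ and R x₃ y₃ imply R (p x₁ x₂ x₃) (p y₁ y₂ y₃). Then R is an equivalence relation. -/
/-- A reflexive relation compatible with a Mal'tsev operation is an equivalence relation. -/
theorem maltsev_compatible_reflexive_is_equivalence {X : Type*}
    (p : X → X → X → X)
    (h1 : ∀ x y, p x x y = y) (h2 : ∀ x y, p x y y = x)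
    (R : X → X → Prop)
    (hrefl : ∀ x, R x x)
    (hcomp : ∀ x₁ x₂ x₃ y₁ y₂ y₃, R x₁ y₁ → R x₂ y₂ → R x₃ y₃ →
      R (p x₁ x₂ x₃) (p y₁ y₂ y₃)) :
    Equivalence R := by
  constructor
  · exact hrefl
  · intro x y hxy
    have := hcomp x x y x y y (hrefl x) hxy (hrefl y)
    rwa [h1, h2] at this
  · intro x y z hxy hyz
    have := hcomp x y y y y z hxy (hrefl y) hyz
    rwa [h1, h2] at this
end

section
/- Let X be a type equipped with a Mal'tsev operation p, and let R and S be equivalence relations on X, each compatible with p (componentwise: related triples have related p-values). Define the composite (R ∘ S) x z := ∃ y, R x y ∧ S y z. Then R ∘ S = S ∘ R, and R ∘ S is itself an equivalence relation which is the least equivalence relation containing both R and S (it contains R and S, and it is contained in every equivalence relation on X containing both). -/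
/-- In the presence of a Mal'tsev operation, compatible equivalence relations permute,
and their composite is the least equivalence relation containing both. -/
theorem maltsev_equivalences_permute {X : Type*}
    (p : X → X → X → X)
    (h1 : ∀ x y, p x x y = y) (h2 : ∀ x y, p x y y = x)
    (R S : X → X → Prop) (hR : Equivalence R) (hS : Equivalence S)
    (hRcomp : ∀ x₁ x₂ x₃ y₁ y₂ y₃, R x₁ y₁ → R x₂ y₂ → R x₃ y₃ →
      R (p x₁ x₂ x₃) (p y₁ y₂ y₃))
    (hScomp : ∀ x₁ x₂ x₃ y₁ y₂ y₃, S x₁ y₁ → S x₂ y₂ → S x₃ y₃ →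
      S (p x₁ x₂ x₃) (p y₁ y₂ y₃)) :
    (fun x z => ∃ y, R x y ∧ S y z) = (fun x z => ∃ y, S x y ∧ R y z) ∧
    Equivalence (fun x z => ∃ y, R x y ∧ S y z) ∧
    (∀ x z, R x z → ∃ y, R x y ∧ S y z) ∧
    (∀ x z, S x z → ∃ y, R x y ∧ S y z) ∧
    (∀ T : X → X → Prop, Equivalence T → (∀ x y, R x y → T x y) →
      (∀ x y, S x y → T x y) → ∀ x z, (∃ y, R x y ∧ S y z) → T x z) := by
  have fwd : ∀ x z, (∃ y, R x y ∧ S y z) → (∃ y, S x y ∧ R y z) := by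
    rintro x z ⟨y, hxy, hyz⟩
    refine ⟨p x y z, ?_, ?_⟩
    · have := hScomp x y y x y z (hS.refl x) (hS.refl y) hyz
      rwa [h2] at this
    · have := hRcomp x y z y y z hxy (hR.refl y) (hR.refl z)
      rwa [h1] at this
  have bwd : ∀ x z, (∃ y, S x y ∧ R y z) → (∃ y, R x y ∧ S y z) := by
    rintro x z ⟨y, hxy, hyz⟩
    refine ⟨p x y z, ?_, ?_⟩
    · have := hRcomp x y y x y z (hR.refl x) (hR.refl y) hyz
      rwa [h2] at this
    · have := hScomp x y z y y z hxy (hS.refl y) (hS.refl z)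
      rwa [h1] at this
  have heq : (fun x z => ∃ y, R x y ∧ S y z) = (fun x z => ∃ y, S x y ∧ R y z) := by
    funext x z
    exact propext ⟨fwd x z, bwd x z⟩
  refine ⟨heq, ⟨fun x => ⟨x, hR.refl x, hS.refl x⟩, ?_, ?_⟩,
      fun x z h => ⟨z, h, hS.refl z⟩, fun x z h => ⟨x, hR.refl x, h⟩, ?_⟩
  · rintro x z ⟨y, hxy, hyz⟩
    exact bwd z x ⟨y, hS.symm hyz, hR.symm hxy⟩
  · rintro x z w ⟨y, hxy, hyz⟩ ⟨u, hzu, huw⟩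
    obtain ⟨v, hyv, hvu⟩ := bwd y u ⟨z, hyz, hzu⟩
    exact ⟨v, hR.trans hxy hyv, hS.trans hvu huw⟩
  · rintro T hT hRT hST x z ⟨y, hxy, hyz⟩
    exact hT.trans (hRT _ _ hxy) (hST _ _ hyz)
end

section
/- Let p be a Mal'tsev operation on a type X. Then p is associative if and only if it is both left associative and right associative. -/
/-- A Mal'tsev operation is associative iff it is left and right associative. -/
theorem maltsev_associative_iff_left_right {X : Type*}
    (p : X → X → X → X)
    (h1 : ∀ x y, p x x y = y) (h2 : ∀ x y, p x y y = x) :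
    (∀ x y z u v, p (p x y z) u v = p x y (p z u v)) ↔
      ((∀ x y z w, p (p x y z) z w = p x y w) ∧
       (∀ x y z w, p x y (p y z w) = p x z w)) := by
  constructor
  · intro ha
    constructor
    · intro x y z w; rw [ha, h1]
    · intro x y z w; rw [← ha, h2]
  · rintro ⟨hl, hr⟩
    intro x y z u v
    have hv : v = p u z (p z u v) := by rw [hr, h1]
    calc p (p x y z) u v = p (p x y z) u (p u z (p z u v)) := by rw [← hv]
      _ = p (p x y z) z (p z u v) := hr _ _ _ _
      _ = p x y (p z u v) := hl _ _ _ _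
end

section
/- Let p be a Mal'tsev operation on a type X. Then p is autonomous if and only if it is associative and commutative. -/
/-- From an associative commutative Mal'tsev operation and a base point `e`,
build an abelian group structure on `X` with `a + b = p a e b`. -/
def maltsevGroup {X : Type*} (p : X → X → X → X)
    (h1 : ∀ x y, p x x y = y) (h2 : ∀ x y, p x y y = x)
    (hassoc : ∀ x y z u v, p (p x y z) u v = p x y (p z u v))
    (hcomm : ∀ x y z, p x y z = p z y x) (e : X) : AddCommGroup X :=
  letI : Add X := ⟨fun a b => p a e b⟩
  letI : Zero X := ⟨e⟩
  letI : Neg X := ⟨fun a => p e a e⟩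
  { add := (· + ·)
    zero := 0
    neg := Neg.neg
    nsmul := nsmulRec
    zsmul := zsmulRec
    add_assoc := fun a b c => hassoc a e b e c
    zero_add := fun b => h1 e b
    add_zero := fun a => h2 a e
    add_comm := fun a b => hcomm a e b
    neg_add_cancel := fun a => by
      show p (p e a e) e a = e
      rw [hassoc, h1, h2] }

theorem maltsev_repr {X : Type*} (p : X → X → X → X)
    (h1 : ∀ x y, p x x y = y) (h2 : ∀ x y, p x y y = x)
    (hassoc : ∀ x y z u v, p (p x y z) u v = p x y (p z u v))
    (hcomm : ∀ x y z, p x y z = p z y x) (e : X) :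
    letI := maltsevGroup p h1 h2 hassoc hcomm e
    ∀ a b c : X, p a b c = a + (-b + c) := by
  intro a b c
  show p a b c = p a e (p (p e b e) e c)
  rw [hassoc e b e, h1, ← hassoc, h2]

/-- A Mal'tsev operation is autonomous iff it is associative and commutative. -/
theorem maltsev_autonomous_iff_associative_commutative {X : Type*}
    (p : X → X → X → X)
    (h1 : ∀ x y, p x x y = y) (h2 : ∀ x y, p x y y = x) :
    (∀ x₁ y₁ z₁ x₂ y₂ z₂ x₃ y₃ z₃,
      p (p x₁ y₁ z₁) (p x₂ y₂ z₂) (p x₃ y₃ z₃) =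
        p (p x₁ x₂ x₃) (p y₁ y₂ y₃) (p z₁ z₂ z₃)) ↔
    ((∀ x y z u v, p (p x y z) u v = p x y (p z u v)) ∧
     (∀ x y z, p x y z = p z y x)) := by
  constructor
  · intro h
    refine ⟨fun x y z u v => ?_, fun x y z => ?_⟩
    · simpa [h1, h2] using h x y z y y u y y v
    · simpa [h1, h2] using h y y x y y y z y y
  · rintro ⟨hassoc, hcomm⟩
    intro x₁ y₁ z₁ x₂ y₂ z₂ x₃ y₃ z₃
    letI := maltsevGroup p h1 h2 hassoc hcomm x₁
    have hr := maltsev_repr p h1 h2 hassoc hcomm x₁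
    simp only [hr]
    abel
end

section
/- Let p be an associative and commutative Mal'tsev operation on a type X. Then for all x, y, z, u, v in X, p (p x y z) u v = p x (p y z u) v. -/
/-- For an associative and commutative Mal'tsev operation,
`p (p x y z) u v = p x (p y z u) v`. -/
theorem maltsev_assoc_comm_mixed {X : Type*}
    (p : X → X → X → X)
    (h1 : ∀ x y, p x x y = y) (h2 : ∀ x y, p x y y = x)
    (hassoc : ∀ x y z u v, p (p x y z) u v = p x y (p z u v))
    (hcomm : ∀ x y z, p x y z = p z y x) :
    ∀ x y z u v, p (p x y z) u v = p x (p y z u) v := by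
  have hM : ∀ a b c, p (p a b c) c b = a := by
    intro a b c; rw [hassoc, h1, h2]
  have key : ∀ a b c, p a (p a b c) c = b := by
    intro a b c
    have ha : p b c (p a b c) = a := by rw [hcomm]; exact hM a b c
    calc p a (p a b c) c = p (p b c (p a b c)) (p a b c) c := by rw [ha]
      _ = p b c (p (p a b c) (p a b c) c) := hassoc ..
      _ = b := by rw [h1, h2]
  intro x y z u v
  have step : p x (p y z u) u = p x y z := by
    calc p x (p y z u) u = p (p x y y) (p y z u) u := by rw [h2]
      _ = p x y (p y (p y z u) u) := hassoc ..
      _ = p x y z := by rw [key]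
  calc p (p x y z) u v = p (p x (p y z u) u) u v := by rw [step]
    _ = p x (p y z u) (p u u v) := hassoc ..
    _ = p x (p y z u) v := by rw [h1]
end

section
/- Let R and S be equivalence relations on a type X and let p : X → X → X → X be a connector between R and S. Then p is associative on composable chains: for all x, y, z, u, v with x R y, y S z, z R u and u S v, one has p (p x y z) u v = p x y (p z u v). -/
/-- A connector between two equivalence relations is associative on composable chains. -/
theorem connector_associative {X : Type*} (R S : X → X → Prop)
    (hR : Equivalence R) (hS : Equivalence S)
    (p : X → X → X → X)
    (h1 : ∀ x y z, R x y → S y z → S x (p x y z) ∧ R (p x y z) z)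
    (h2a : ∀ x y, S x y → p x x y = y)
    (h2b : ∀ x y, R x y → p x y y = x)
    (h3a : ∀ x y z w, R x y → S y z → S z w → p (p x y z) z w = p x y w)
    (h3b : ∀ x y z w, R x y → R y z → S z w → p x y (p y z w) = p x z w) :
    ∀ x y z u v, R x y → S y z → R z u → S u v →
      p (p x y z) u v = p x y (p z u v) := by
  intro x y z u v hxy hyz hzu huv
  have hqz : R (p x y z) z := (h1 x y z hxy hyz).2
  have hzt : S z (p z u v) := (h1 z u v hzu huv).1
  rw [← h3b (p x y z) z u v hqz hzu huv, h3a x y z (p z u v) hxy hyz hzt]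
end

section
/- Let X be a type equipped with two quaternary operations p, q : X → X → X → X → X satisfying p x y y z = x, q x y y z = z, and p x x y y = q x x y y for all x, y, z. Let R and S be equivalence relations on X, each compatible with p and q (componentwise: related quadruples have related values). Then R, S are 3-permutable: for all x, w, (∃ y z, R x y ∧ S y z ∧ R z w) ↔ (∃ y z, S x y ∧ R y z ∧ S z w). -/
/-- Hagemann–Mitschke terms imply 3-permutability of compatible equivalence relations. -/
theorem hagemann_mitschke_three_permutable {X : Type*}
    (p q : X → X → X → X → X)
    (hp : ∀ x y z, p x y y z = x) (hq : ∀ x y z, q x y y z = z)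
    (hpq : ∀ x y, p x x y y = q x x y y)
    (R S : X → X → Prop) (hR : Equivalence R) (hS : Equivalence S)
    (hRp : ∀ x₁ x₂ x₃ x₄ y₁ y₂ y₃ y₄, R x₁ y₁ → R x₂ y₂ → R x₃ y₃ → R x₄ y₄ →
      R (p x₁ x₂ x₃ x₄) (p y₁ y₂ y₃ y₄))
    (hRq : ∀ x₁ x₂ x₃ x₄ y₁ y₂ y₃ y₄, R x₁ y₁ → R x₂ y₂ → R x₃ y₃ → R x₄ y₄ →
      R (q x₁ x₂ x₃ x₄) (q y₁ y₂ y₃ y₄))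
    (hSp : ∀ x₁ x₂ x₃ x₄ y₁ y₂ y₃ y₄, S x₁ y₁ → S x₂ y₂ → S x₃ y₃ → S x₄ y₄ →
      S (p x₁ x₂ x₃ x₄) (p y₁ y₂ y₃ y₄))
    (hSq : ∀ x₁ x₂ x₃ x₄ y₁ y₂ y₃ y₄, S x₁ y₁ → S x₂ y₂ → S x₃ y₃ → S x₄ y₄ →
      S (q x₁ x₂ x₃ x₄) (q y₁ y₂ y₃ y₄)) :
    ∀ x w, (∃ y z, R x y ∧ S y z ∧ R z w) ↔ (∃ y z, S x y ∧ R y z ∧ S z w) := by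
  have key : ∀ (A B : X → X → Prop), Equivalence A → Equivalence B →
      (∀ x₁ x₂ x₃ x₄ y₁ y₂ y₃ y₄, A x₁ y₁ → A x₂ y₂ → A x₃ y₃ → A x₄ y₄ →
        A (p x₁ x₂ x₃ x₄) (p y₁ y₂ y₃ y₄)) →
      (∀ x₁ x₂ x₃ x₄ y₁ y₂ y₃ y₄, A x₁ y₁ → A x₂ y₂ → A x₃ y₃ → A x₄ y₄ →
        A (q x₁ x₂ x₃ x₄) (q y₁ y₂ y₃ y₄)) →
      (∀ x₁ x₂ x₃ x₄ y₁ y₂ y₃ y₄, B x₁ y₁ → B x₂ y₂ → B x₃ y₃ → B x₄ y₄ →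
        B (p x₁ x₂ x₃ x₄) (p y₁ y₂ y₃ y₄)) →
      (∀ x₁ x₂ x₃ x₄ y₁ y₂ y₃ y₄, B x₁ y₁ → B x₂ y₂ → B x₃ y₃ → B x₄ y₄ →
        B (q x₁ x₂ x₃ x₄) (q y₁ y₂ y₃ y₄)) →
      ∀ x w, (∃ y z, A x y ∧ B y z ∧ A z w) → (∃ y z, B x y ∧ A y z ∧ B z w) := by
    intro A B hA hB hAp hAq hBp hBq x w ⟨y, z, hxy, hyz, hzw⟩
    refine ⟨p x y z w, q x y z w, ?_, ?_, ?_⟩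
    · have := hBp x y y w x y z w (hB.refl x) (hB.refl y) hyz (hB.refl w)
      rwa [hp] at this
    · have h1 := hAp x y z w y y z z hxy (hA.refl y) (hA.refl z) (hA.symm hzw)
      have h2 := hAq x y z w y y z z hxy (hA.refl y) (hA.refl z) (hA.symm hzw)
      rw [hpq] at h1
      exact hA.trans h1 (hA.symm h2)
    · have := hBq x y y w x y z w (hB.refl x) (hB.refl y) hyz (hB.refl w)
      rw [hq] at this
      exact hB.symm this
  intro x w
  exact ⟨key R S hR hS hRp hRq hSp hSq x w, key S R hS hR hSp hSq hRp hRq x w⟩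
end

section
/- Let X be a type and r, s two equivalence relations (setoids) on X such that: (i) their intersection is equality (r x y and s x y imply x = y); (ii) they permute: for all x, z, (∃ y, r x y ∧ s y z) ↔ (∃ y, s x y ∧ r y z); (iii) their join is the total relation, i.e. the least equivalence relation containing both r and s relates any two elements of X. Then the canonical map X → (X/r) × (X/s), sending x to the pair of its r-class and its s-class, is a bijection. -/
/-- Direct product decomposition: if two setoids intersect in equality, permute, and
their join is the total relation, then the canonical map to the product of the quotients
is a bijection. -/
theorem direct_product_decomposition {X : Type*} (r s : Setoid X)
    (hinter : ∀ x y, r x y → s x y → x = y)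
    (hperm : ∀ x z, (∃ y, r x y ∧ s y z) ↔ (∃ y, s x y ∧ r y z))
    (hjoin : r ⊔ s = ⊤) :
    Function.Bijective
      (fun x : X => ((Quotient.mk r x : Quotient r), (Quotient.mk s x : Quotient s))) := by
  constructor
  · intro a b h
    simp only [Prod.mk.injEq, Quotient.eq] at h
    exact hinter a b h.1 h.2
  · let t : Setoid X := {
      r := fun x z => ∃ y, r x y ∧ s y z
      iseqv := by
        constructor
        · intro x; exact ⟨x, r.refl x, s.refl x⟩
        · rintro x z ⟨y, hxy, hyz⟩
          exact (hperm z x).mpr ⟨y, s.symm hyz, r.symm hxy⟩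
        · rintro x z u ⟨y, hxy, hyz⟩ ⟨w, hzw, hwu⟩
          obtain ⟨v, hyv, hvw⟩ := (hperm y w).mpr ⟨z, hyz, hzw⟩
          exact ⟨v, r.trans hxy hyv, s.trans hvw hwu⟩ }
    intro ⟨qa, qb⟩
    obtain ⟨a, rfl⟩ := Quotient.exists_rep qa
    obtain ⟨b, rfl⟩ := Quotient.exists_rep qb
    have hle : r ⊔ s ≤ t := sup_le
      (fun x y h => ⟨y, h, s.refl y⟩)
      (fun x y h => ⟨x, r.refl x, h⟩)
    have htot : t a b := hle (hjoin ▸ trivial : (r ⊔ s) a b)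
    obtain ⟨y, hay, hyb⟩ := htot
    exact ⟨y, Prod.ext (Quotient.sound (r.symm hay)) (Quotient.sound hyb)⟩
end

section
/- Let X be a type equipped with an associative and commutative Mal'tsev operation p, and let e ∈ X. Then X carries an abelian group structure with addition x + y := p x e y, identity element e, and inverse -x := p e x e; moreover p x y z = (x + (-y)) + z for all x, y, z. -/
/-- An associative commutative Mal'tsev operation with a chosen base point gives an
abelian group structure, and the operation is recovered as `p x y z = (x + (-y)) + z`. -/
theorem maltsev_gives_abelian_group {X : Type*}
    (p : X → X → X → X)
    (h1 : ∀ x y, p x x y = y) (h2 : ∀ x y, p x y y = x)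
    (hassoc : ∀ x y z u v, p (p x y z) u v = p x y (p z u v))
    (hcomm : ∀ x y z, p x y z = p z y x)
    (e : X) :
    ∃ G : AddCommGroup X,
      (∀ x y : X, G.add x y = p x e y) ∧
      G.zero = e ∧
      (∀ x : X, G.neg x = p e x e) ∧
      (∀ x y z : X, p x y z = G.add (G.add x (G.neg y)) z) := by
  letI : Add X := ⟨fun x y => p x e y⟩
  letI : Zero X := ⟨e⟩
  letI : Neg X := ⟨fun x => p e x e⟩
  refine ⟨{ add := fun x y => p x e y
            zero := e
            neg := fun x => p e x e
            add_assoc := fun x y z => hassoc x e y e z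
            zero_add := fun x => h1 e x
            add_zero := fun x => h2 x e
            neg_add_cancel := fun x => by
              show p (p e x e) e x = e
              rw [hassoc, h1, h2]
            add_comm := fun x y => hcomm x e y
            nsmul := nsmulRec
            zsmul := zsmulRec }, fun x y => rfl, rfl, fun x => rfl, fun x y z => ?_⟩
  show p x y z = p (p x e (p e y e)) e z
  rw [← hassoc, h2, hassoc, h1]
end

section
/- Let X be a type equipped with a right associative Mal'tsev operation p. Define the Chasles relation Ch on X × X by Ch (x, y) (x', y') := (y = p x x' y'). Then Ch is an equivalence relation on X × X. -/
/-- The Chasles relation of a right associative Mal'tsev operation is an equivalence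
relation on `X × X`. -/
theorem chasles_relation_equivalence {X : Type*}
    (p : X → X → X → X)
    (h1 : ∀ x y, p x x y = y) (h2 : ∀ x y, p x y y = x)
    (hra : ∀ x y z w, p x y (p y z w) = p x z w) :
    Equivalence (fun a b : X × X => a.2 = p a.1 b.1 b.2) := by
  constructor
  · intro a; exact (h1 a.1 a.2).symm
  · intro a b h; rw [h, hra, h1]
  · intro a b c hab hbc; rw [hab, hbc, hra]
end

section
/- Let C and D be categories, T : C ⥤ D and G : D ⥤ C functors, and η : G ⋙ T ≅ 𝟭 D a natural isomorphism. (i) If the pair (T, G) is correlated on monomorphisms, then every monomorphism m : Z ⟶ G.obj X in C such that T.map m is an isomorphism is itself an isomorphism. (ii) Conversely, if C has finite limits, T preserves finite limits, and every monomorphism m : Z ⟶ G.obj X (X an object of D) with T.map m an isomorphism is an isomorphism, then the pair (T, G) is correlated on monomorphisms. -/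
open CategoryTheory

/-- Given `T : C ⥤ D`, `G : D ⥤ C` and `η : G ⋙ T ≅ 𝟭 D`, the pair `(T, G)` is
correlated on monomorphisms if for every monomorphism `m : Z ⟶ G.obj X` the morphism
`G.map (T.map m ≫ η.hom.app X)` factorizes through `m`. -/
def CorrelatedOnMonos {C D : Type*} [Category C] [Category D]
    (T : C ⥤ D) (G : D ⥤ C) (η : G ⋙ T ≅ 𝟭 D) : Prop :=
  ∀ (X : D) (Z : C) (m : Z ⟶ G.obj X), Mono m →
    ∃ k : G.obj (T.obj Z) ⟶ Z, k ≫ m = G.map (T.map m ≫ η.hom.app X)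

/-- (i) If `(T, G)` is correlated on monomorphisms, then any monomorphism `m : Z ⟶ G.obj X`
with `T.map m` an isomorphism is an isomorphism.  (ii) Conversely, if `C` has finite limits
and `T` preserves finite limits, this property implies that `(T, G)` is correlated on
monomorphisms. -/
theorem correlatedOnMonos_iso_characterization {C D : Type*} [Category C] [Category D]
    (T : C ⥤ D) (G : D ⥤ C) (η : G ⋙ T ≅ 𝟭 D) :
    (CorrelatedOnMonos T G η →
      ∀ (X : D) (Z : C) (m : Z ⟶ G.obj X), Mono m → IsIso (T.map m) → IsIso m) ∧
    (∀ (_ : Limits.HasFiniteLimits C) (_ : Limits.PreservesFiniteLimits T),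
      (∀ (X : D) (Z : C) (m : Z ⟶ G.obj X), Mono m → IsIso (T.map m) → IsIso m) →
      CorrelatedOnMonos T G η) := by
  constructor
  · intro h X Z m hm hiso
    obtain ⟨k, hk⟩ := h X Z m hm
    have hIso : IsIso (G.map (T.map m ≫ η.hom.app X)) := by
      have : IsIso (T.map m ≫ η.hom.app X) := inferInstance
      infer_instance
    have hsplit : IsSplitEpi m := by
      refine ⟨⟨⟨inv (G.map (T.map m ≫ η.hom.app X)) ≫ k, ?_⟩⟩⟩
      rw [Category.assoc, hk, IsIso.inv_hom_id]
    exact isIso_of_mono_of_isSplitEpi m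
  · intro hfl hpl h X Z m hm
    set g : G.obj (T.obj Z) ⟶ G.obj X := G.map (T.map m ≫ η.hom.app X) with hg
    let P := Limits.pullback g m
    let fst : P ⟶ G.obj (T.obj Z) := Limits.pullback.fst g m
    let snd : P ⟶ Z := Limits.pullback.snd g m
    have hcond : fst ≫ g = snd ≫ m := Limits.pullback.condition
    have hmono : Mono fst := Limits.pullback.fst_of_mono
    -- key equation: η.hom.app (T.obj Z) ≫ T.map m = T.map g
    have hkey : η.hom.app (T.obj Z) ≫ T.map m = T.map g := by
      have hn := η.hom.naturality (T.map m ≫ η.hom.app X)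
      simp only [Functor.comp_map, Functor.id_map] at hn
      have : η.hom.app (T.obj Z) ≫ T.map m ≫ η.hom.app X
          = T.map (G.map (T.map m ≫ η.hom.app X)) ≫ η.hom.app X := hn.symm
      have := this =≫ inv (η.hom.app X)
      simpa [g] using this
    -- T preserves the pullback
    have hpb : IsIso (T.map fst) := by
      have hm2 : Mono (T.map fst) := T.map_mono fst
      have hl := Limits.isLimitPullbackConeMapOfIsLimit T
        Limits.pullback.condition
        (Limits.pullbackIsPullback g m)
      have hw : 𝟙 (T.obj (G.obj (T.obj Z))) ≫ T.map g
          = η.hom.app (T.obj Z) ≫ T.map m := by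
        rw [Category.id_comp, hkey]
      obtain ⟨l, hl1, hl2⟩ := Limits.PullbackCone.IsLimit.lift' hl
        (𝟙 _) (η.hom.app (T.obj Z)) hw
      have : IsSplitEpi (T.map fst) := ⟨⟨⟨l, hl1⟩⟩⟩
      exact isIso_of_mono_of_isSplitEpi _
    have : IsIso fst := h (T.obj Z) P fst hmono hpb
    exact ⟨inv fst ≫ snd, by rw [Category.assoc, ← hcond, IsIso.inv_hom_id_assoc]⟩
end

section
/- Let C be a category with finite limits, T : C ⥤ D a functor preserving finite limits, G : D ⥤ C a functor, and η : G ⋙ T ≅ 𝟭 D a natural isomorphism. If the pair (T, G) is correlated on monomorphisms, then the functor G is full. -/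
open CategoryTheory

/-- If `C` has finite limits, `T` preserves finite limits and `(T, G)` is correlated on
monomorphisms, then `G` is full. -/
theorem correlatedOnMonos_full {C D : Type*} [Category C] [Category D]
    [Limits.HasFiniteLimits C]
    (T : C ⥤ D) [Limits.PreservesFiniteLimits T]
    (G : D ⥤ C) (η : G ⋙ T ≅ 𝟭 D)
    (hcorr : CorrelatedOnMonos T G η) :
    G.Full := by
  constructor
  intro X Y f
  -- candidate morphism
  set g : X ⟶ Y := η.inv.app X ≫ T.map f ≫ η.hom.app Y with hg
  have hT : T.map (G.map g) = T.map f := by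
    have hnat := η.hom.naturality g
    simp only [Functor.comp_map, Functor.id_map] at hnat
    have : T.map (G.map g) ≫ η.hom.app Y = T.map f ≫ η.hom.app Y := by
      rw [hnat, hg]
      simp
    exact (cancel_mono (η.hom.app Y)).mp this
  -- equalizer of f and G.map g
  let m : Limits.equalizer f (G.map g) ⟶ G.obj X := Limits.equalizer.ι f (G.map g)
  have hmono : Mono m := inferInstance
  have hcond : m ≫ f = m ≫ G.map g := Limits.equalizer.condition f (G.map g)
  -- T.map m is a split epi
  have hTfork := Limits.isLimitForkMapOfIsLimit T hcond
      (Limits.equalizerIsEqualizer f (G.map g))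
  obtain ⟨l, hl⟩ := Limits.Fork.IsLimit.lift' hTfork (𝟙 _) (by rw [hT])
  have hsplit : IsSplitEpi (T.map m) := ⟨⟨⟨l, hl⟩⟩⟩
  -- hence G.map (T.map m ≫ η.hom.app X) is a split epi
  haveI := hsplit
  have hsplit2 : IsSplitEpi (G.map (T.map m ≫ η.hom.app X)) := inferInstance
  obtain ⟨k, hk⟩ := hcorr X _ m hmono
  have hsec := hsplit2.exists_splitEpi.some
  have hmid : (hsec.section_ ≫ k) ≫ m = 𝟙 _ := by
    rw [Category.assoc, hk, hsec.id]
  have : IsSplitEpi m := ⟨⟨⟨hsec.section_ ≫ k, hmid⟩⟩⟩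
  have hiso : IsIso m := isIso_of_mono_of_isSplitEpi m
  refine ⟨g, ?_⟩
  have := hcond
  rw [← cancel_epi m]
  exact this.symm
end

section
/- Let C be a category with finite limits, T : C ⥤ D a functor preserving finite limits, G : D ⥤ C a functor, and η : G ⋙ T ≅ 𝟭 D a natural isomorphism. Then the pair (T, G) is strongly correlated on monomorphisms if and only if G is saturated on subobjects, i.e. for every monomorphism m : Z ⟶ G.obj X in C there exist a monomorphism n : W ⟶ X in D and an isomorphism γ : Z ≅ G.obj W such that γ.hom ≫ G.map n = m. -/
open CategoryTheory

/-- Given `T : C ⥤ D`, `G : D ⥤ C` and `η : G ⋙ T ≅ 𝟭 D`, the pair `(T, G)` is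
strongly correlated on monomorphisms if for every monomorphism `m : Z ⟶ G.obj X` the
morphism `G.map (T.map m ≫ η.hom.app X)` factorizes through `m` via an isomorphism. -/
def StronglyCorrelatedOnMonos {C D : Type*} [Category C] [Category D]
    (T : C ⥤ D) (G : D ⥤ C) (η : G ⋙ T ≅ 𝟭 D) : Prop :=
  ∀ (X : D) (Z : C) (m : Z ⟶ G.obj X), Mono m →
    ∃ k : G.obj (T.obj Z) ⟶ Z, IsIso k ∧ k ≫ m = G.map (T.map m ≫ η.hom.app X)

/-- A functor `G : D ⥤ C` is saturated on subobjects if every monomorphism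
`m : Z ⟶ G.obj X` is, up to isomorphism, the image under `G` of a monomorphism in `D`. -/
def SaturatedOnSubobjects {C D : Type*} [Category C] [Category D] (G : D ⥤ C) : Prop :=
  ∀ (X : D) (Z : C) (m : Z ⟶ G.obj X), Mono m →
    ∃ (W : D) (n : W ⟶ X) (_ : Mono n) (γ : Z ≅ G.obj W), γ.hom ≫ G.map n = m

/-- If `C` has finite limits and `T` preserves finite limits, the pair `(T, G)` is strongly
correlated on monomorphisms iff `G` is saturated on subobjects. -/
theorem stronglyCorrelated_iff_saturated {C D : Type*} [Category C] [Category D]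
    [Limits.HasFiniteLimits C]
    (T : C ⥤ D) [Limits.PreservesFiniteLimits T]
    (G : D ⥤ C) (η : G ⋙ T ≅ 𝟭 D) :
    StronglyCorrelatedOnMonos T G η ↔ SaturatedOnSubobjects G := by
  constructor
  · intro h X Z m hm
    obtain ⟨k, hk, hkm⟩ := h X Z m hm
    have hTm : Mono (T.map m) := T.map_mono m
    refine ⟨T.obj Z, T.map m ≫ η.hom.app X, mono_comp _ _, (asIso k).symm, ?_⟩
    simp only [asIso]
    rw [← hkm]
    simp
  · intro h X Z m hm
    obtain ⟨W, n, hn, γ, hγ⟩ := h X Z m hm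
    refine ⟨G.map (T.map γ.hom) ≫ G.map (η.hom.app W) ≫ γ.inv, inferInstance, ?_⟩
    have hnat : T.map (G.map n) ≫ η.hom.app X = η.hom.app W ≫ n := η.hom.naturality n
    rw [← hγ]
    simp only [Functor.map_comp, Category.assoc, Iso.inv_hom_id_assoc]
    simp only [← Functor.map_comp, hnat]
end
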